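/- Assume n ≥ 3. Then dω = θ∧ω (the structure belongs to the Gray-Hervella class W₂⊕W₄) if and only if v₀ = 0 and Dᵗ∘J' + J'∘D = (Tr D/(n−1))·J' (equivalently, D − (Tr D/(2(n−1)))·Id_a ∈ sp(n−1,ℝ)). -/
import Mathlib


open scoped BigOperators
open Matrix

noncomputable section

/-- The underlying `2n`-dimensional real vector space `ℝ^{2n}`, whose standard basis
plays the role of the orthonormal basis `e₀, e₁, …, e_{2n-1}`. -/
abbrev G (n : ℕ) := Fin (2*n) → ℝ

/-- The inner product `⟨·,·⟩` making the standard basis orthonormal. -/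
def inn {n : ℕ} (x y : G n) : ℝ := ∑ i, x i * y i

/-- The standard basis vector `e k` (indexed by a natural number `k`). -/
def E (n : ℕ) (k : ℕ) : G n := fun i => if (i : ℕ) = k then 1 else 0

/-- Membership in `a = span{e₂, …, e_{2n-1}}`. -/
def inA {n : ℕ} (x : G n) : Prop := ∀ i : Fin (2*n), (i : ℕ) < 2 → x i = 0

/-- The orthogonal almost complex structure `J e_{2i} = e_{2i+1}`, `J e_{2i+1} = -e_{2i}`. -/
def Jm (n : ℕ) : Matrix (Fin (2*n)) (Fin (2*n)) ℝ :=
  Matrix.of fun k l =>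
    if (k : ℕ) = (l : ℕ) + 1 ∧ Even (l : ℕ) then (1 : ℝ)
    else if (l : ℕ) = (k : ℕ) + 1 ∧ Even (k : ℕ) then -1 else 0

/-- `D` is (the extension by zero of) an endomorphism of `a`: it vanishes on
`span{e₀, e₁}` and takes values orthogonal to `span{e₀, e₁}`. -/
def DinA {n : ℕ} (D : Matrix (Fin (2*n)) (Fin (2*n)) ℝ) : Prop :=
  ∀ k l : Fin (2*n), ((k : ℕ) < 2 ∨ (l : ℕ) < 2) → D k l = 0

/-- The matrix of `L` determined by the data `μ, v₀, w₀, D`, i.e.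
`L e₀ = 0`, `L e₁ = μ e₁ + v₀` and `L x = ⟨w₀, x⟩ e₁ + D x` for `x ∈ a`
(for `v₀, w₀ ∈ a` and `D` an endomorphism of `a`). -/
def Lm {n : ℕ} (μ : ℝ) (v₀ w₀ : G n) (D : Matrix (Fin (2*n)) (Fin (2*n)) ℝ) :
    Matrix (Fin (2*n)) (Fin (2*n)) ℝ :=
  Matrix.of fun k l =>
    (if (k : ℕ) = 1 ∧ (l : ℕ) = 1 then μ else 0)
      + (if (l : ℕ) = 1 then v₀ k else 0)
      + (if (k : ℕ) = 1 then w₀ l else 0)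
      + D k l

/-- The Lie bracket of the almost abelian Lie algebra `g = ℝ e₀ ⋉_L u`:
`[e₀, u] = L u` for `u ∈ u = span{e₁, …, e_{2n-1}}` and `[u, v] = 0` for `u, v ∈ u`. -/
def br {n : ℕ} (L : Matrix (Fin (2*n)) (Fin (2*n)) ℝ) (x y : G n) : G n :=
  inn x (E n 0) • L.mulVec y - inn y (E n 0) • L.mulVec x

/-- `nabla` is the Levi-Civita connection of `⟨·,·⟩`, i.e. it satisfies the Koszul
formula `2⟨∇_x y, z⟩ = ⟨[x,y],z⟩ − ⟨[y,z],x⟩ + ⟨[z,x],y⟩`. -/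
def Koszul {n : ℕ} (L : Matrix (Fin (2*n)) (Fin (2*n)) ℝ) (nabla : G n → G n → G n) : Prop :=
  ∀ x y z : G n, 2 * inn (nabla x y) z
    = inn (br L x y) z - inn (br L y z) x + inn (br L z x) y

/-- `(∇_y J)(x) = ∇_y (Jx) − J ∇_y x`. -/
def covJ {n : ℕ} (nabla : G n → G n → G n) (y x : G n) : G n :=
  nabla y ((Jm n).mulVec x) - (Jm n).mulVec (nabla y x)

/-- The rough Laplacian
`(∇*∇J)(x) = Σ_i ((∇_{e_i}(∇_{e_i}J))(x) − (∇_{∇_{e_i}e_i} J)(x))`. -/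
def roughLap {n : ℕ} (nabla : G n → G n → G n) (x : G n) : G n :=
  ∑ i : Fin (2*n),
    (nabla (E n i.val) (covJ nabla (E n i.val) x)
      - covJ nabla (E n i.val) (nabla (E n i.val) x)
      - covJ nabla (nabla (E n i.val) (E n i.val)) x)

/-- `J` is harmonic: `J ∘ (∇*∇J) = (∇*∇J) ∘ J`. -/
def Harmonic {n : ℕ} (nabla : G n → G n → G n) : Prop :=
  ∀ x : G n, (Jm n).mulVec (roughLap nabla x) = roughLap nabla ((Jm n).mulVec x)

/-- Symmetric part of a matrix. -/
def symPart {n : ℕ} (M : Matrix (Fin (2*n)) (Fin (2*n)) ℝ) :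
    Matrix (Fin (2*n)) (Fin (2*n)) ℝ := (1/2 : ℝ) • (M + Mᵀ)

/-- Skew-symmetric part of a matrix. -/
def skewPart {n : ℕ} (M : Matrix (Fin (2*n)) (Fin (2*n)) ℝ) :
    Matrix (Fin (2*n)) (Fin (2*n)) ℝ := (1/2 : ℝ) • (M - Mᵀ)

/-- `γ = (v₀ + w₀)/2`. -/
def gam {n : ℕ} (v₀ w₀ : G n) : G n := (1/2 : ℝ) • (v₀ + w₀)

/-- `ρ = (v₀ − w₀)/2`. -/
def rho {n : ℕ} (v₀ w₀ : G n) : G n := (1/2 : ℝ) • (v₀ - w₀)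

/-- The fundamental 2-form `ω(x,y) = ⟨Jx, y⟩`. -/
def om {n : ℕ} (x y : G n) : ℝ := inn ((Jm n).mulVec x) y

/-- `(∇_x ω)(y,z) = −ω(∇_x y, z) − ω(y, ∇_x z)`. -/
def nablaOm {n : ℕ} (nabla : G n → G n → G n) (x y z : G n) : ℝ :=
  - om (nabla x y) z - om y (nabla x z)

/-- `dω(x,y,z) = −ω([x,y],z) − ω([y,z],x) − ω([z,x],y)`. -/
def dOm {n : ℕ} (L : Matrix (Fin (2*n)) (Fin (2*n)) ℝ) (x y z : G n) : ℝ :=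
  - om (br L x y) z - om (br L y z) x - om (br L z x) y

/-- The codifferential `δω(x) = −Σ_i (∇_{e_i}ω)(e_i, x)`. -/
def deltaOm {n : ℕ} (nabla : G n → G n → G n) (x : G n) : ℝ :=
  - ∑ i : Fin (2*n), nablaOm nabla (E n i.val) (E n i.val) x

/-- The Nijenhuis tensor `N(x,y) = [x,y] + J([Jx,y] + [x,Jy]) − [Jx,Jy]`. -/
def Nij {n : ℕ} (L : Matrix (Fin (2*n)) (Fin (2*n)) ℝ) (x y : G n) : G n :=
  br L x y
    + (Jm n).mulVec (br L ((Jm n).mulVec x) y + br L x ((Jm n).mulVec y))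
    - br L ((Jm n).mulVec x) ((Jm n).mulVec y)

/-- `T⁻(x,y,z) = (∇_x ω)(y,z) − (∇_{Jx} ω)(Jy,z)`. -/
def Tminus {n : ℕ} (nabla : G n → G n → G n) (x y z : G n) : ℝ :=
  nablaOm nabla x y z - nablaOm nabla ((Jm n).mulVec x) ((Jm n).mulVec y) z

/-- `T⁺(x,y,z) = (∇_x ω)(y,z) + (∇_{Jx} ω)(Jy,z)`. -/
def Tplus {n : ℕ} (nabla : G n → G n → G n) (x y z : G n) : ℝ :=
  nablaOm nabla x y z + nablaOm nabla ((Jm n).mulVec x) ((Jm n).mulVec y) z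

/-- `U(x,y,z) = ⟨x,y⟩δω(z) − ⟨x,z⟩δω(y) − ⟨x,Jy⟩δω(Jz) + ⟨x,Jz⟩δω(Jy)`. -/
def Uten {n : ℕ} (nabla : G n → G n → G n) (x y z : G n) : ℝ :=
  inn x y * deltaOm nabla z - inn x z * deltaOm nabla y
    - inn x ((Jm n).mulVec y) * deltaOm nabla ((Jm n).mulVec z)
    + inn x ((Jm n).mulVec z) * deltaOm nabla ((Jm n).mulVec y)

/-- The Lee form `θ(x) = −(1/(n−1)) δω(Jx)`. -/
def Lee {n : ℕ} (nabla : G n → G n → G n) (x : G n) : ℝ :=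
  -(1/((n : ℝ) - 1)) * deltaOm nabla ((Jm n).mulVec x)

/-- The identity of `a`, extended by zero to `g`. -/
def Ia (n : ℕ) : Matrix (Fin (2*n)) (Fin (2*n)) ℝ :=
  Matrix.of fun k l => if k = l ∧ 2 ≤ (k : ℕ) then (1 : ℝ) else 0

namespace S13

variable {n : ℕ}

lemma inn_eq (x y : G n) : inn x y = x ⬝ᵥ y := rfl

lemma inn_comm (x y : G n) : inn x y = inn y x := by
  simp [inn_eq, dotProduct_comm]

lemma E_app (k i : Fin (2*n)) : E n (k : ℕ) i = if i = k then 1 else 0 := by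
  simp [E, Fin.ext_iff]

lemma inn_E (x : G n) (k : Fin (2*n)) : inn x (E n (k:ℕ)) = x k := by
  simp [inn, E_app, Finset.sum_ite_eq']

lemma E_inn (x : G n) (k : Fin (2*n)) : inn (E n (k:ℕ)) x = x k := by
  rw [inn_comm, inn_E]

lemma mulVec_E (M : Matrix (Fin (2*n)) (Fin (2*n)) ℝ) (k : Fin (2*n)) :
    M *ᵥ (E n (k:ℕ)) = fun i => M i k := by
  funext i
  simp [Matrix.mulVec, dotProduct, E_app, Finset.sum_ite_eq']

lemma inn_mulVec_left (M : Matrix (Fin (2*n)) (Fin (2*n)) ℝ) (x y : G n) :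
    inn (M *ᵥ x) y = inn x (Mᵀ *ᵥ y) := by
  simp [inn_eq, Matrix.mulVec_transpose, Matrix.dotProduct_mulVec,
    dotProduct_comm (M *ᵥ x) y, dotProduct_comm x]

/-- partner index under J -/
def pt (k : Fin (2*n)) : Fin (2*n) :=
  ⟨if Even (k : ℕ) then (k:ℕ)+1 else (k:ℕ)-1, by
    have hk := k.isLt
    split
    · next h => obtain ⟨m, hm⟩ := h; omega
    · omega⟩

/-- sign of row k of J -/
def sg (k : Fin (2*n)) : ℝ := if Even (k : ℕ) then -1 else 1

lemma pt_val (k : Fin (2*n)) :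
    ((pt k : Fin (2*n)) : ℕ) = if Even (k : ℕ) then (k:ℕ)+1 else (k:ℕ)-1 := rfl

lemma Jm_apply (k l : Fin (2*n)) : Jm n k l = if l = pt k then sg k else 0 := by
  have hk := k.isLt; have hl := l.isLt
  simp only [Jm, Matrix.of_apply, pt, sg, Fin.ext_iff, Nat.even_iff]
  split_ifs <;> first | rfl | omega

end S13
namespace S13
variable {n : ℕ}

lemma Jmul (x : G n) (k : Fin (2*n)) : (Jm n *ᵥ x) k = sg k * x (pt k) := by
  simp [Matrix.mulVec, dotProduct, Jm_apply, ite_mul, Finset.sum_ite_eq']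

lemma pt_pt (k : Fin (2*n)) : pt (pt k) = k := by
  have hk := k.isLt
  simp only [pt, Fin.ext_iff, Nat.even_iff]
  split_ifs <;> omega

lemma sg_pt (k : Fin (2*n)) : sg (pt k) = - sg k := by
  have hk := k.isLt
  simp only [pt, sg, Nat.even_iff]
  split_ifs <;> first | (exfalso; omega) | norm_num

lemma sg_sq (k : Fin (2*n)) : sg k * sg k = 1 := by
  simp only [sg]; split_ifs <;> norm_num

lemma Jskew (k l : Fin (2*n)) : Jm n l k = - Jm n k l := by
  rw [Jm_apply, Jm_apply]
  by_cases h : l = pt k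
  · subst h; rw [if_pos rfl, if_pos (pt_pt k).symm, sg_pt]
  · have h2 : k ≠ pt l := fun hh => h (by rw [hh, pt_pt])
    rw [if_neg h2, if_neg h, neg_zero]

lemma Jt : (Jm n)ᵀ = - Jm n := by
  ext k l
  rw [Matrix.transpose_apply, Matrix.neg_apply, Jskew]

lemma inn_J_left (x y : G n) : inn (Jm n *ᵥ x) y = - inn x (Jm n *ᵥ y) := by
  rw [inn_mulVec_left, Jt, Matrix.neg_mulVec, inn_eq, inn_eq, dotProduct_neg]

lemma JJ (x : G n) : Jm n *ᵥ (Jm n *ᵥ x) = - x := by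
  funext k
  rw [Jmul, Jmul, sg_pt, pt_pt]
  simp only [Pi.neg_apply]
  linear_combination (-(x k)) * sg_sq k

lemma J_E (k : Fin (2*n)) : Jm n *ᵥ (E n (k:ℕ)) = fun i => sg i * (if pt i = k then 1 else 0) := by
  funext i; rw [Jmul]; simp [E_app]

end S13
namespace S13
variable {n : ℕ}

/-- Koszul right-hand side. -/
def Fk (L : Matrix (Fin (2*n)) (Fin (2*n)) ℝ) (x y z : G n) : ℝ :=
  inn (br L x y) z - inn (br L y z) x + inn (br L z x) y

lemma koszul_inn {L : Matrix (Fin (2*n)) (Fin (2*n)) ℝ} {nabla : G n → G n → G n}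
    (hK : Koszul L nabla) (x y z : G n) :
    inn (nabla x y) z = (1/2) * Fk L x y z := by
  have := hK x y z; unfold Fk; linarith

lemma inn_E0 (x : G n) (i0 : Fin (2*n)) (h0 : (i0:ℕ) = 0) : inn x (E n 0) = x i0 := by
  have := inn_E x i0; rwa [h0] at this

lemma inn_br (L : Matrix (Fin (2*n)) (Fin (2*n)) ℝ) (i0 : Fin (2*n)) (h0 : (i0:ℕ) = 0)
    (a b c : G n) :
    inn (br L a b) c = a i0 * inn (L *ᵥ b) c - b i0 * inn (L *ᵥ a) c := by
  simp only [br, inn_eq, sub_dotProduct, smul_dotProduct, smul_eq_mul]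
  rw [← inn_eq, ← inn_eq, ← inn_eq, ← inn_eq, inn_E0 a i0 h0, inn_E0 b i0 h0]

lemma nablaOm_eq {L : Matrix (Fin (2*n)) (Fin (2*n)) ℝ} {nabla : G n → G n → G n}
    (hK : Koszul L nabla) (a b c : G n) :
    nablaOm nabla a b c
      = (1/2) * Fk L a b (Jm n *ᵥ c) - (1/2) * Fk L a c (Jm n *ᵥ b) := by
  have h1 : om (nabla a b) c = - ((1/2) * Fk L a b (Jm n *ᵥ c)) := by
    show inn (Jm n *ᵥ nabla a b) c = _
    rw [inn_J_left, koszul_inn hK]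
  have h2 : om b (nabla a c) = (1/2) * Fk L a c (Jm n *ᵥ b) := by
    show inn (Jm n *ᵥ b) (nabla a c) = _
    rw [inn_comm, koszul_inn hK]
  rw [nablaOm, h1, h2]; ring

lemma sum_swap_J (M : Matrix (Fin (2*n)) (Fin (2*n)) ℝ) :
    (∑ i : Fin (2*n), ∑ k : Fin (2*n), M i k * Jm n k i)
      = - ∑ i : Fin (2*n), ∑ k : Fin (2*n), M k i * Jm n k i := by
  rw [Finset.sum_comm]
  calc ∑ k : Fin (2*n), ∑ i : Fin (2*n), M i k * Jm n k i
      = ∑ k : Fin (2*n), ∑ i : Fin (2*n), -(M i k * Jm n i k) :=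
        Finset.sum_congr rfl (fun k _ => Finset.sum_congr rfl (fun i _ => by
          rw [Jskew]; ring))
    _ = - ∑ k : Fin (2*n), ∑ i : Fin (2*n), M i k * Jm n i k := by
        simp [Finset.sum_neg_distrib]

lemma T12 (M : Matrix (Fin (2*n)) (Fin (2*n)) ℝ) :
    (∑ i : Fin (2*n), inn (M *ᵥ (E n ((i:Fin (2*n)):ℕ))) (Jm n *ᵥ E n ((i:Fin (2*n)):ℕ)))
      + (∑ i : Fin (2*n), inn (M *ᵥ (Jm n *ᵥ E n ((i:Fin (2*n)):ℕ))) (E n ((i:Fin (2*n)):ℕ)))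
      = 0 := by
  have e1 : ∀ i : Fin (2*n), inn (M *ᵥ (E n (i:ℕ))) (Jm n *ᵥ E n (i:ℕ))
      = ∑ k : Fin (2*n), M k i * Jm n k i := by
    intro i; rw [mulVec_E, mulVec_E]; rfl
  have e2 : ∀ i : Fin (2*n), inn (M *ᵥ (Jm n *ᵥ E n (i:ℕ))) (E n (i:ℕ))
      = ∑ k : Fin (2*n), M i k * Jm n k i := by
    intro i
    rw [mulVec_E, inn_E]
    rfl
  simp only [e1, e2]
  rw [sum_swap_J M]
  ring

end S13
namespace S13
variable {n : ℕ} {μ : ℝ} {v₀ w₀ : G n} {D : Matrix (Fin (2*n)) (Fin (2*n)) ℝ}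

lemma fin_cond (i1 : Fin (2*n)) (h1 : (i1:ℕ) = 1) :
    ∀ k : Fin (2*n), ((k:ℕ) = 1) = (k = i1) := fun k => by
  simp [Fin.ext_iff, h1]

lemma Lmul (i1 : Fin (2*n)) (h1 : (i1:ℕ) = 1) (x : G n) (k : Fin (2*n)) :
    (Lm μ v₀ w₀ D *ᵥ x) k
      = (if (k:ℕ) = 1 then μ * x i1 + inn w₀ x else 0) + v₀ k * x i1 + (D *ᵥ x) k := by
  have hc := fin_cond i1 h1
  by_cases hk : k = i1 <;>
    simp [Matrix.mulVec, dotProduct, Lm, hc, hk, add_mul, ite_mul, zero_mul,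
      Finset.sum_add_distrib, Finset.sum_ite_eq', inn] <;> ring

lemma LTmul (i1 : Fin (2*n)) (h1 : (i1:ℕ) = 1) (y : G n) (k : Fin (2*n)) :
    ((Lm μ v₀ w₀ D)ᵀ *ᵥ y) k
      = (if (k:ℕ) = 1 then μ * y i1 + inn v₀ y else 0) + w₀ k * y i1 + (Dᵀ *ᵥ y) k := by
  have hc := fin_cond i1 h1
  by_cases hk : k = i1 <;>
    simp [Matrix.mulVec, dotProduct, Matrix.transpose_apply, Lm, hc, hk, add_mul,
      ite_mul, zero_mul, Finset.sum_add_distrib, Finset.sum_ite_eq', inn] <;> ring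

lemma Dmul_lt2 (hD : DinA D) (x : G n) (k : Fin (2*n)) (hk : (k:ℕ) < 2) :
    (D *ᵥ x) k = 0 := by
  have : ∀ l : Fin (2*n), D k l = 0 := fun l => hD k l (Or.inl hk)
  simp [Matrix.mulVec, dotProduct, this]

lemma DTmul_lt2 (hD : DinA D) (x : G n) (k : Fin (2*n)) (hk : (k:ℕ) < 2) :
    (Dᵀ *ᵥ x) k = 0 := by
  have : ∀ l : Fin (2*n), D l k = 0 := fun l => hD l k (Or.inr hk)
  simp [Matrix.mulVec, dotProduct, Matrix.transpose_apply, this]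

lemma Lrow0 (hv : inA v₀) (hD : DinA D) (i0 i1 : Fin (2*n))
    (h0 : (i0:ℕ) = 0) (h1 : (i1:ℕ) = 1) (x : G n) :
    (Lm μ v₀ w₀ D *ᵥ x) i0 = 0 := by
  rw [Lmul i1 h1, Dmul_lt2 hD x i0 (by omega), hv i0 (by omega), if_neg (by omega)]
  ring

lemma innLE1 (hw : inA w₀) (hD : DinA D) (i1 : Fin (2*n)) (h1 : (i1:ℕ) = 1) (x : G n) :
    inn (Lm μ v₀ w₀ D *ᵥ E n ((i1 : Fin (2*n)):ℕ)) x = μ * x i1 + inn v₀ x := by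
  have hc := fin_cond i1 h1
  have hw1 : w₀ i1 = 0 := hw i1 (by omega)
  have hD1 : ∀ k, D k i1 = 0 := fun k => hD k i1 (Or.inr (by omega))
  rw [mulVec_E]
  show (∑ k, Lm μ v₀ w₀ D k i1 * x k) = _
  simp [Lm, h1, hw1, hD1, hc, add_mul, ite_mul, zero_mul, Finset.sum_add_distrib,
    Finset.sum_ite_eq', inn]

lemma trace_Lm (hv : inA v₀) (hw : inA w₀) (i1 : Fin (2*n)) (h1 : (i1:ℕ) = 1) :
    Matrix.trace (Lm μ v₀ w₀ D) = μ + Matrix.trace D := by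
  have hc := fin_cond i1 h1
  have hv1 : v₀ i1 = 0 := hv i1 (by omega)
  have hw1 : w₀ i1 = 0 := hw i1 (by omega)
  simp [Matrix.trace, Matrix.diag, Lm, hc, Finset.sum_add_distrib, Finset.sum_ite_eq',
    hv1, hw1]

lemma sum_diag (M : Matrix (Fin (2*n)) (Fin (2*n)) ℝ) :
    (∑ i : Fin (2*n), inn (M *ᵥ E n ((i : Fin (2*n)):ℕ)) (E n ((i : Fin (2*n)):ℕ)))
      = Matrix.trace M := by
  have : ∀ i : Fin (2*n), inn (M *ᵥ E n (i:ℕ)) (E n (i:ℕ)) = M i i := fun i => by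
    rw [mulVec_E, inn_E]
  simp [this, Matrix.trace, Matrix.diag]

lemma pt_of_val0 (i0 i1 : Fin (2*n)) (h0 : (i0:ℕ) = 0) (h1 : (i1:ℕ) = 1) :
    pt i0 = i1 := by
  simp [Fin.ext_iff, pt_val, h0, h1]

lemma pt_of_val1 (i0 i1 : Fin (2*n)) (h0 : (i0:ℕ) = 0) (h1 : (i1:ℕ) = 1) :
    pt i1 = i0 := by
  simp [Fin.ext_iff, pt_val, h0, h1, Nat.even_iff]

lemma sg_of_val0 (i0 : Fin (2*n)) (h0 : (i0:ℕ) = 0) : sg i0 = -1 := by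
  simp [sg, h0]

lemma sg_of_val1 (i1 : Fin (2*n)) (h1 : (i1:ℕ) = 1) : sg i1 = 1 := by
  simp [sg, h1, Nat.even_iff]

lemma J_E0 (i0 i1 : Fin (2*n)) (h0 : (i0:ℕ) = 0) (h1 : (i1:ℕ) = 1) :
    Jm n *ᵥ E n ((i0 : Fin (2*n)):ℕ) = E n ((i1 : Fin (2*n)):ℕ) := by
  funext k
  rw [Jmul, E_app, E_app]
  by_cases hk : k = i1
  · rw [hk]
    rw [pt_of_val1 i0 i1 h0 h1, sg_of_val1 i1 h1, if_pos rfl, if_pos rfl]; ring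
  · have : pt k ≠ i0 := by
      intro h; apply hk
      have := congrArg pt h
      rwa [pt_pt, pt_of_val0 i0 i1 h0 h1] at this
    rw [if_neg this, if_neg hk, mul_zero]

lemma J_E1 (i0 i1 : Fin (2*n)) (h0 : (i0:ℕ) = 0) (h1 : (i1:ℕ) = 1) :
    Jm n *ᵥ E n ((i1 : Fin (2*n)):ℕ) = - E n ((i0 : Fin (2*n)):ℕ) := by
  funext k
  rw [Jmul, Pi.neg_apply, E_app, E_app]
  by_cases hk : k = i0
  · rw [hk]
    rw [pt_of_val0 i0 i1 h0 h1, sg_of_val0 i0 h0, if_pos rfl, if_pos rfl]; ring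
  · have : pt k ≠ i1 := by
      intro h; apply hk
      have := congrArg pt h
      rwa [pt_pt, pt_of_val1 i0 i1 h0 h1] at this
    rw [if_neg this, if_neg hk, mul_zero, neg_zero]

end S13
namespace S13
variable {n : ℕ} {μ : ℝ} {v₀ w₀ : G n} {D : Matrix (Fin (2*n)) (Fin (2*n)) ℝ}

lemma deltaOm_formula (hv : inA v₀) (hw : inA w₀) (hD : DinA D)
    (i0 i1 : Fin (2*n)) (h0 : (i0:ℕ) = 0) (h1 : (i1:ℕ) = 1)
    {nabla : G n → G n → G n} (hK : Koszul (Lm μ v₀ w₀ D) nabla) (x : G n) :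
    deltaOm nabla x = Matrix.trace D * x i1 - inn v₀ x := by
  set L := Lm μ v₀ w₀ D with hLdef
  have hE0 : ∀ i : Fin (2*n), (E n (i:ℕ)) i0 = if i0 = i then 1 else 0 := fun i => E_app i i0
  have hJi0 : ∀ i : Fin (2*n), (Jm n *ᵥ E n (i:ℕ)) i0 = -(if i1 = i then 1 else 0) := by
    intro i
    rw [Jmul, sg_of_val0 i0 h0, pt_of_val0 i0 i1 h0 h1, E_app]
    ring
  -- sum of second Koszul terms
  have h2s : (∑ i : Fin (2*n), Fk L (E n (i:ℕ)) x (Jm n *ᵥ E n (i:ℕ)))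
      = -2*(μ * x i1 + inn v₀ x) := by
    have expand : ∀ i : Fin (2*n), Fk L (E n (i:ℕ)) x (Jm n *ᵥ E n (i:ℕ))
        = ((if i0 = i then 1 else 0) * inn (L *ᵥ x) (Jm n *ᵥ E n (i:ℕ))
            - x i0 * inn (L *ᵥ E n (i:ℕ)) (Jm n *ᵥ E n (i:ℕ)))
          - (x i0 * inn (L *ᵥ (Jm n *ᵥ E n (i:ℕ))) (E n (i:ℕ))
            + (if i1 = i then 1 else 0) * inn (L *ᵥ x) (E n (i:ℕ)))
          + (-(if i1 = i then 1 else 0) * inn (L *ᵥ E n (i:ℕ)) x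
            - (if i0 = i then 1 else 0) * inn (L *ᵥ (Jm n *ᵥ E n (i:ℕ))) x) := by
      intro i
      rw [Fk, inn_br L i0 h0, inn_br L i0 h0, inn_br L i0 h0, hE0, hJi0]
      ring
    rw [Finset.sum_congr rfl (fun i _ => expand i)]
    rw [Finset.sum_add_distrib, Finset.sum_sub_distrib, Finset.sum_sub_distrib,
      Finset.sum_add_distrib, Finset.sum_sub_distrib]
    simp only [ite_mul, one_mul, zero_mul, neg_mul, Finset.sum_ite_eq, Finset.mem_univ,
      if_true, Finset.sum_neg_distrib, ← Finset.mul_sum]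
    have hT := T12 L
    have hT' : x i0 * ((∑ i : Fin (2*n), inn (L *ᵥ (E n (i:ℕ))) (Jm n *ᵥ E n (i:ℕ)))
        + (∑ i : Fin (2*n), inn (L *ᵥ (Jm n *ᵥ E n (i:ℕ))) (E n (i:ℕ)))) = 0 := by
      rw [hT]; ring
    rw [J_E0 i0 i1 h0 h1]
    rw [innLE1 hw hD i1 h1]
    ring_nf
    ring_nf at hT'
    linarith [hT']
  -- sum of first Koszul terms
  have h1s : (∑ i : Fin (2*n), Fk L (E n (i:ℕ)) (E n (i:ℕ)) (Jm n *ᵥ x))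
      = 2 * (-(x i1)) * (μ + Matrix.trace D) := by
    have expand : ∀ i : Fin (2*n), Fk L (E n (i:ℕ)) (E n (i:ℕ)) (Jm n *ᵥ x)
        = -((if i0 = i then 1 else 0) * inn (L *ᵥ (Jm n *ᵥ x)) (E n (i:ℕ)))
          - ((if i0 = i then 1 else 0) * inn (L *ᵥ (Jm n *ᵥ x)) (E n (i:ℕ)))
          + ((Jm n *ᵥ x) i0 * inn (L *ᵥ E n (i:ℕ)) (E n (i:ℕ)))
          + ((Jm n *ᵥ x) i0 * inn (L *ᵥ E n (i:ℕ)) (E n (i:ℕ))) := by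
      intro i
      rw [Fk, inn_br L i0 h0, inn_br L i0 h0, inn_br L i0 h0, hE0]
      ring
    rw [Finset.sum_congr rfl (fun i _ => expand i)]
    rw [Finset.sum_add_distrib, Finset.sum_add_distrib, Finset.sum_sub_distrib]
    simp only [ite_mul, one_mul, zero_mul, Finset.sum_neg_distrib, Finset.sum_ite_eq,
      Finset.mem_univ, if_true, ← Finset.mul_sum]
    rw [sum_diag L, inn_E, Lrow0 hv hD i0 i1 h0 h1, hLdef, trace_Lm hv hw i1 h1]
    have hJx : (Jm n *ᵥ x) i0 = -(x i1) := by
      rw [Jmul, sg_of_val0 i0 h0, pt_of_val0 i0 i1 h0 h1]; ring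
    rw [hJx]; ring
  -- assemble
  unfold deltaOm
  rw [Finset.sum_congr rfl (fun (i : Fin (2*n)) _ => nablaOm_eq hK (E n (i:ℕ)) (E n (i:ℕ)) x)]
  rw [Finset.sum_sub_distrib, ← Finset.mul_sum, ← Finset.mul_sum, h2s, h1s]
  ring

end S13
namespace S13
variable {n : ℕ} {μ : ℝ} {v₀ w₀ : G n} {D : Matrix (Fin (2*n)) (Fin (2*n)) ℝ}

lemma inn_add_left (u v w : G n) : inn (u + v) w = inn u w + inn v w := by
  simp [inn_eq, add_dotProduct]

lemma inn_sub_left (u v w : G n) : inn (u - v) w = inn u w - inn v w := by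
  simp [inn_eq, sub_dotProduct]

lemma inn_smul_left (c : ℝ) (u w : G n) : inn (c • u) w = c * inn u w := by
  simp [inn_eq, smul_dotProduct]

lemma inn_neg_left (u w : G n) : inn (-u) w = - inn u w := by
  simp [inn_eq, neg_dotProduct]

lemma inn_zero_left (w : G n) : inn 0 w = 0 := by
  simp [inn_eq, zero_dotProduct]

lemma om_def (x y : G n) : om x y = inn (Jm n *ᵥ x) y := rfl

lemma om_zero_left (y : G n) : om 0 y = 0 := by
  rw [om_def, Matrix.mulVec_zero, inn_zero_left]

lemma om_smul_left (c : ℝ) (u y : G n) : om (c • u) y = c * om u y := by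
  rw [om_def, Matrix.mulVec_smul, inn_smul_left, om_def]

lemma om_sub_left (u v y : G n) : om (u - v) y = om u y - om v y := by
  rw [om_def, Matrix.mulVec_sub, inn_sub_left, om_def, om_def]

lemma om_EE (a b : Fin (2*n)) : om (E n (a:ℕ)) (E n (b:ℕ)) = Jm n b a := by
  show inn (Jm n *ᵥ E n (a:ℕ)) (E n (b:ℕ)) = Jm n b a
  rw [mulVec_E, inn_E]

lemma Lee_formula (hv : inA v₀) (hw : inA w₀) (hD : DinA D)
    (i0 i1 : Fin (2*n)) (h0 : (i0:ℕ) = 0) (h1 : (i1:ℕ) = 1)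
    {nabla : G n → G n → G n} (hK : Koszul (Lm μ v₀ w₀ D) nabla) (x : G n) :
    Lee nabla x
      = -(1/((n:ℝ)-1)) * (Matrix.trace D * x i0 + inn (Jm n *ᵥ v₀) x) := by
  rw [Lee, deltaOm_formula hv hw hD i0 i1 h0 h1 hK]
  have e1 : (Jm n *ᵥ x) i1 = x i0 := by
    rw [Jmul, sg_of_val1 i1 h1, pt_of_val1 i0 i1 h0 h1]; ring
  have e2 : inn (Jm n *ᵥ v₀) x = - inn v₀ (Jm n *ᵥ x) := inn_J_left v₀ x
  rw [e1]
  rw [show inn v₀ (Jm n *ᵥ x) = - inn (Jm n *ᵥ v₀) x by rw [e2]; ring]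
  ring

lemma om_br (L : Matrix (Fin (2*n)) (Fin (2*n)) ℝ) (i0 : Fin (2*n)) (h0 : (i0:ℕ) = 0)
    (a b c : G n) :
    om (br L a b) c = a i0 * om (L *ᵥ b) c - b i0 * om (L *ᵥ a) c := by
  rw [br, show inn a (E n 0) = a i0 from inn_E0 a i0 h0,
    show inn b (E n 0) = b i0 from inn_E0 b i0 h0,
    om_sub_left, om_smul_left, om_smul_left]

lemma br_uu (L : Matrix (Fin (2*n)) (Fin (2*n)) ℝ) (i0 : Fin (2*n)) (h0 : (i0:ℕ) = 0)
    (a b : Fin (2*n)) (ha : 2 ≤ (a:ℕ)) (hb : 2 ≤ (b:ℕ)) :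
    br L (E n (a:ℕ)) (E n (b:ℕ)) = 0 := by
  rw [br, show inn (E n (a:ℕ)) (E n 0) = (E n (a:ℕ)) i0 from inn_E0 _ i0 h0,
    show inn (E n (b:ℕ)) (E n 0) = (E n (b:ℕ)) i0 from inn_E0 _ i0 h0,
    E_app, E_app, if_neg (by intro h; rw [h] at h0; omega),
    if_neg (by intro h; rw [h] at h0; omega)]
  simp

end S13
namespace S13
variable {n : ℕ} {μ : ℝ} {v₀ w₀ : G n} {D : Matrix (Fin (2*n)) (Fin (2*n)) ℝ}

lemma v0_zero (hn : 3 ≤ n) (hv : inA v₀) (hw : inA w₀) (hD : DinA D)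
    (i0 i1 : Fin (2*n)) (h0 : (i0:ℕ) = 0) (h1 : (i1:ℕ) = 1)
    {nabla : G n → G n → G n} (hK : Koszul (Lm μ v₀ w₀ D) nabla)
    (Hyp : ∀ x y z : G n, dOm (Lm μ v₀ w₀ D) x y z
        = Lee nabla x * om y z + Lee nabla y * om z x + Lee nabla z * om x y) :
    v₀ = 0 := by
  funext j
  by_cases hj : (j:ℕ) < 2
  · rw [hv j hj]; rfl
  push_neg at hj
  have hjlt := j.isLt
  set m := pt j with hm
  have hmval : (m:ℕ) = if Even (j:ℕ) then (j:ℕ)+1 else (j:ℕ)-1 := pt_val j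
  have hm2 : 2 ≤ (m:ℕ) := by
    rw [hmval]; split_ifs with h <;> rw [Nat.even_iff] at h <;> omega
  have hmlt := m.isLt
  set p : Fin (2*n) := ⟨if (m:ℕ) < 4 then 4 else 2, by split_ifs <;> omega⟩ with hp
  have hpval : (p:ℕ) = if (m:ℕ) < 4 then 4 else 2 := rfl
  have hpe : Even (p:ℕ) := by rw [hpval]; split_ifs <;> decide
  set q := pt p with hq
  have hqval : (q:ℕ) = (p:ℕ) + 1 := by rw [hq, pt_val, if_pos hpe]
  have hp2 : 2 ≤ (p:ℕ) := by rw [hpval]; split_ifs <;> omega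
  have hq2 : 2 ≤ (q:ℕ) := by omega
  have hqodd : ¬ Even ((q : Fin (2*n)):ℕ) := by
    rw [hqval, Nat.even_iff]
    rw [Nat.even_iff] at hpe
    omega
  have hptq : pt q = p := by rw [hq, pt_pt]
  have h_pq : om (E n (p:ℕ)) (E n (q:ℕ)) = 1 := by
    rw [om_EE, Jm_apply, hptq, if_pos rfl, sg, if_neg hqodd]
  have h_qm : om (E n (q:ℕ)) (E n (m:ℕ)) = 0 := by
    rw [om_EE, Jm_apply, if_neg]
    intro h
    have hval := congrArg (fun z : Fin (2*n) => (z:ℕ)) h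
    simp only [pt_val] at hval
    rw [hqval, hpval] at hval
    split_ifs at hval <;> simp only [Nat.even_iff] at * <;> omega
  have h_mp : om (E n (m:ℕ)) (E n (p:ℕ)) = 0 := by
    rw [om_EE, Jm_apply, if_neg]
    intro h
    have hval := congrArg (fun z : Fin (2*n) => (z:ℕ)) h
    rw [← hq] at hval
    simp only [hqval, hpval] at hval
    split_ifs at hval <;> omega
  have hdom : dOm (Lm μ v₀ w₀ D) (E n (m:ℕ)) (E n (p:ℕ)) (E n (q:ℕ)) = 0 := by
    rw [dOm, br_uu _ i0 h0 m p hm2 hp2, br_uu _ i0 h0 p q hp2 hq2,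
      br_uu _ i0 h0 q m hq2 hm2]
    simp [om_zero_left]
  have heq := Hyp (E n (m:ℕ)) (E n (p:ℕ)) (E n (q:ℕ))
  rw [hdom, h_pq, h_qm, h_mp, mul_one, mul_zero, mul_zero, add_zero, add_zero] at heq
  rw [Lee_formula hv hw hD i0 i1 h0 h1 hK] at heq
  have e1 : (E n (m:ℕ)) i0 = 0 := by
    rw [E_app, if_neg]
    intro h
    rw [h] at h0; omega
  have e2 : inn (Jm n *ᵥ v₀) (E n (m:ℕ)) = sg m * v₀ j := by
    rw [inn_E, Jmul, hm, pt_pt]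
  rw [e1, e2, mul_zero, zero_add] at heq
  have hne : ((n:ℝ) - 1) ≠ 0 := by
    have h3 : (3:ℝ) ≤ (n:ℝ) := by exact_mod_cast hn
    linarith
  have hsg : sg m = -1 ∨ sg m = 1 := by rw [sg]; split_ifs <;> simp
  show v₀ j = (0 : G n) j
  rw [Pi.zero_apply]
  field_simp at heq
  rcases hsg with h|h <;> rw [h] at heq <;> linarith

end S13
namespace S13
variable {n : ℕ} {μ : ℝ} {v₀ w₀ : G n} {D : Matrix (Fin (2*n)) (Fin (2*n)) ℝ}

lemma om_neg_left (u y : G n) : om (-u) y = - om u y := by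
  rw [om_def, Matrix.mulVec_neg, inn_neg_left, om_def]

lemma Dcond (hv : inA (0 : G n)) (hw : inA w₀) (hD : DinA D)
    (i0 i1 : Fin (2*n)) (h0 : (i0:ℕ) = 0) (h1 : (i1:ℕ) = 1)
    {nabla : G n → G n → G n} (hK : Koszul (Lm μ 0 w₀ D) nabla)
    (Hyp : ∀ x y z : G n, dOm (Lm μ 0 w₀ D) x y z
        = Lee nabla x * om y z + Lee nabla y * om z x + Lee nabla z * om x y) :
    ∀ x : G n, inA x → Dᵀ *ᵥ (Jm n *ᵥ x) + Jm n *ᵥ (D *ᵥ x)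
      = (Matrix.trace D / ((n:ℝ)-1)) • (Jm n *ᵥ x) := by
  intro x hx
  set L := Lm μ (0 : G n) w₀ D with hLdef
  have hx0 : x i0 = 0 := hx i0 (by omega)
  have hx1 : x i1 = 0 := hx i1 (by omega)
  have hLee : ∀ u : G n, Lee nabla u = -(1/((n:ℝ)-1)) * (Matrix.trace D * u i0) := by
    intro u
    rw [Lee_formula hv hw hD i0 i1 h0 h1 hK, Matrix.mulVec_zero, inn_zero_left]
    ring
  have hLx : L *ᵥ x = inn w₀ x • E n ((i1 : Fin (2*n)):ℕ) + D *ᵥ x := by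
    funext k
    rw [Lmul i1 h1, hx1]
    by_cases hk : k = i1
    · simp [hk, h1, E, E_app]
    · have hk' : ¬((k:ℕ) = 1) := fun hh => hk (by apply Fin.ext; rw [h1]; exact hh)
      simp [hk, hk', h1, E, E_app]
  have hJLx : Jm n *ᵥ (L *ᵥ x)
      = inn w₀ x • (- E n ((i0 : Fin (2*n)):ℕ)) + Jm n *ᵥ (D *ᵥ x) := by
    rw [hLx, Matrix.mulVec_add, Matrix.mulVec_smul, J_E1 i0 i1 h0 h1]
  have hLTJx : Lᵀ *ᵥ (Jm n *ᵥ x) = Dᵀ *ᵥ (Jm n *ᵥ x) := by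
    funext k
    rw [LTmul i1 h1]
    have hJx1 : (Jm n *ᵥ x) i1 = x i0 := by
      rw [Jmul, sg_of_val1 i1 h1, pt_of_val1 i0 i1 h0 h1]; ring
    rw [hJx1, hx0, inn_zero_left]
    simp
  have hcol0 : L *ᵥ E n ((i0 : Fin (2*n)):ℕ) = 0 := by
    funext k
    rw [mulVec_E]
    show L k i0 = 0
    simp [hLdef, Lm, h0, hw i0 (by omega), hD k i0 (Or.inr (by omega))]
  have hbr1 : br L (E n ((i0 : Fin (2*n)):ℕ)) x = L *ᵥ x := by
    rw [br, inn_E0 _ i0 h0, inn_E0 _ i0 h0, hx0, E_app, if_pos rfl]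
    simp
  funext m
  have hbr2 : br L x (E n ((m : Fin (2*n)):ℕ))
      = -((if i0 = m then (1:ℝ) else 0) • (L *ᵥ x)) := by
    rw [br, inn_E0 _ i0 h0, inn_E0 _ i0 h0, hx0, E_app]
    simp
  have hbr3 : br L (E n ((m : Fin (2*n)):ℕ)) (E n ((i0 : Fin (2*n)):ℕ))
      = -(L *ᵥ E n ((m : Fin (2*n)):ℕ)) := by
    rw [br, inn_E0 _ i0 h0, inn_E0 _ i0 h0, E_app, E_app, if_pos rfl, hcol0]
    simp
  have heq := Hyp (E n ((i0 : Fin (2*n)):ℕ)) x (E n ((m : Fin (2*n)):ℕ))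
  rw [dOm, hbr1, hbr2, hbr3, om_neg_left, om_neg_left, om_smul_left] at heq
  have hom1 : om (L *ᵥ x) (E n ((m : Fin (2*n)):ℕ))
      = inn w₀ x * (-(if m = i0 then (1:ℝ) else 0)) + (Jm n *ᵥ (D *ᵥ x)) m := by
    rw [om_def, inn_E, hJLx, Pi.add_apply, Pi.smul_apply, Pi.neg_apply, E_app,
      smul_eq_mul]
  have hom2 : om (L *ᵥ x) (E n ((i0 : Fin (2*n)):ℕ)) = -(inn w₀ x) := by
    rw [om_def, inn_E, hJLx, Pi.add_apply, Pi.smul_apply, Pi.neg_apply, E_app,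
      if_pos rfl, smul_eq_mul, Jmul, sg_of_val0 i0 h0, pt_of_val0 i0 i1 h0 h1,
      Dmul_lt2 hD x i1 (by omega)]
    ring
  have hom3 : om (L *ᵥ E n ((m : Fin (2*n)):ℕ)) x = -((Dᵀ *ᵥ (Jm n *ᵥ x)) m) := by
    rw [om_def, inn_J_left, inn_mulVec_left, hLTJx, E_inn]
  have hom4 : om x (E n ((m : Fin (2*n)):ℕ)) = (Jm n *ᵥ x) m := by
    rw [om_def, inn_E]
  have hom5 : om (E n ((i0 : Fin (2*n)):ℕ)) x = 0 := by
    rw [om_def, J_E0 i0 i1 h0 h1, E_inn, hx1]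
  rw [hom1, hom2, hom3, hom4, hom5, hLee, hLee x, hLee, hx0, E_app, if_pos rfl] at heq
  rw [Pi.add_apply, Pi.smul_apply, smul_eq_mul]
  by_cases hm : m = i0
  · have hm' : i0 = m := hm.symm
    rw [if_pos hm, if_pos hm'] at heq
    have hJxm : (Jm n *ᵥ x) m = 0 := by
      rw [hm, Jmul, sg_of_val0 i0 h0, pt_of_val0 i0 i1 h0 h1, hx1]; ring
    rw [hJxm] at heq ⊢
    have hDTm : (Dᵀ *ᵥ (Jm n *ᵥ x)) m = 0 := by
      rw [hm]; exact DTmul_lt2 hD _ i0 (by omega)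
    have hJDm : (Jm n *ᵥ (D *ᵥ x)) m = 0 := by
      rw [hm, Jmul, sg_of_val0 i0 h0, pt_of_val0 i0 i1 h0 h1,
        Dmul_lt2 hD x i1 (by omega)]
      ring
    rw [hDTm, hJDm]
    ring
  · have hm' : ¬ (i0 = m) := fun h => hm h.symm
    rw [if_neg hm, if_neg hm'] at heq
    have hgoal : (Dᵀ *ᵥ (Jm n *ᵥ x)) m + (Jm n *ᵥ (D *ᵥ x)) m
        = Matrix.trace D / ((n:ℝ)-1) * (Jm n *ᵥ x) m := by
      linear_combination -heq
    linarith [hgoal]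

end S13
namespace S13
variable {n : ℕ} {μ : ℝ} {v₀ w₀ : G n} {D : Matrix (Fin (2*n)) (Fin (2*n)) ℝ}

lemma pt_lt2 (k : Fin (2*n)) : ((pt k : Fin (2*n)):ℕ) < 2 ↔ (k:ℕ) < 2 := by
  rw [pt_val]
  split_ifs with h <;> rw [Nat.even_iff] at h <;> omega

lemma Dmul_trunc (hD : DinA D) (z : G n) :
    D *ᵥ (fun k => if (k:ℕ) < 2 then 0 else z k) = D *ᵥ z := by
  funext k
  show (∑ l, D k l * (if (l:ℕ) < 2 then 0 else z l)) = ∑ l, D k l * z l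
  apply Finset.sum_congr rfl
  intro l _
  by_cases hl : (l:ℕ) < 2
  · simp [hD k l (Or.inr hl)]
  · simp [hl]

lemma DTmul_trunc (hD : DinA D) (z : G n) :
    Dᵀ *ᵥ (fun k => if (k:ℕ) < 2 then 0 else z k) = Dᵀ *ᵥ z := by
  funext k
  show (∑ l, Dᵀ k l * (if (l:ℕ) < 2 then 0 else z l)) = ∑ l, Dᵀ k l * z l
  apply Finset.sum_congr rfl
  intro l _
  by_cases hl : (l:ℕ) < 2
  · simp [Matrix.transpose_apply, hD l k (Or.inl hl)]
  · simp [hl]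

lemma DT_E0 (hD : DinA D) (i0 : Fin (2*n)) (h0 : (i0:ℕ) = 0) :
    Dᵀ *ᵥ E n ((i0 : Fin (2*n)):ℕ) = 0 := by
  funext k
  rw [mulVec_E]
  show Dᵀ k i0 = 0
  rw [Matrix.transpose_apply, hD i0 k (Or.inl (by omega))]

lemma DT_E1 (hD : DinA D) (i1 : Fin (2*n)) (h1 : (i1:ℕ) = 1) :
    Dᵀ *ᵥ E n ((i1 : Fin (2*n)):ℕ) = 0 := by
  funext k
  rw [mulVec_E]
  show Dᵀ k i1 = 0
  rw [Matrix.transpose_apply, hD i1 k (Or.inl (by omega))]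

lemma J_trunc (i0 i1 : Fin (2*n)) (h0 : (i0:ℕ) = 0) (h1 : (i1:ℕ) = 1) (z : G n) :
    Jm n *ᵥ (fun k => if (k:ℕ) < 2 then 0 else z k)
      = Jm n *ᵥ z + z i1 • E n ((i0 : Fin (2*n)):ℕ) - z i0 • E n ((i1 : Fin (2*n)):ℕ) := by
  have hne01 : ¬ ((i0 : Fin (2*n)) = i1) := by intro hh; rw [hh, h1] at h0; omega
  have hne10 : ¬ ((i1 : Fin (2*n)) = i0) := fun hh => hne01 hh.symm
  have e0 : ((i0 : Fin (2*n)):ℕ) < 2 := by omega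
  have e1 : ((i1 : Fin (2*n)):ℕ) < 2 := by omega
  funext k
  simp only [Pi.sub_apply, Pi.add_apply, Pi.smul_apply, smul_eq_mul, Jmul, E_app]
  by_cases hk : (k:ℕ) < 2
  · rcases (by omega : (k:ℕ) = 0 ∨ (k:ℕ) = 1) with hk0 | hk1
    · have d1 : k = i0 := by apply Fin.ext; omega
      simp [d1, pt_of_val0 i0 i1 h0 h1, sg_of_val0 i0 h0, e1, hne01]
    · have d1 : k = i1 := by apply Fin.ext; omega
      simp [d1, pt_of_val1 i0 i1 h0 h1, sg_of_val1 i1 h1, e0, hne10]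
  · have hpt2 : ¬ ((pt k : Fin (2*n)):ℕ) < 2 := by rw [pt_lt2]; exact hk
    have d0 : ¬ (k = i0) := by intro hh; rw [hh] at hk; omega
    have d1 : ¬ (k = i1) := by intro hh; rw [hh] at hk; omega
    simp [hpt2, d0, d1]

lemma keyv (hw : inA w₀) (hD : DinA D)
    (i0 i1 : Fin (2*n)) (h0 : (i0:ℕ) = 0) (h1 : (i1:ℕ) = 1)
    (H : ∀ x : G n, inA x → Dᵀ *ᵥ (Jm n *ᵥ x) + Jm n *ᵥ (D *ᵥ x)
        = (Matrix.trace D / ((n:ℝ)-1)) • (Jm n *ᵥ x))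
    (y z : G n) :
    om ((Lm μ 0 w₀ D) *ᵥ z) y - om ((Lm μ 0 w₀ D) *ᵥ y) z
        + (Matrix.trace D / ((n:ℝ)-1)) * om y z
      = ((μ - Matrix.trace D / ((n:ℝ)-1)) * y i1 + inn w₀ y) * z i0
        - ((μ - Matrix.trace D / ((n:ℝ)-1)) * z i1 + inn w₀ z) * y i0 := by
  set κ := Matrix.trace D / ((n:ℝ)-1) with hκ
  set L := Lm μ (0 : G n) w₀ D with hLdef
  have hza : inA (fun k : Fin (2*n) => if (k:ℕ) < 2 then 0 else z k) := by
    intro i hi; simp [hi]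
  have Hz : Dᵀ *ᵥ (Jm n *ᵥ z) + Jm n *ᵥ (D *ᵥ z)
      = κ • (Jm n *ᵥ z) + (κ * z i1) • E n ((i0 : Fin (2*n)):ℕ)
        - (κ * z i0) • E n ((i1 : Fin (2*n)):ℕ) := by
    have h := H _ hza
    rw [Dmul_trunc hD z, J_trunc i0 i1 h0 h1 z, Matrix.mulVec_sub, Matrix.mulVec_add,
      Matrix.mulVec_smul, Matrix.mulVec_smul, DT_E0 hD i0 h0, DT_E1 hD i1 h1] at h
    rw [smul_sub, smul_add, smul_smul, smul_smul] at h
    simpa using h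
  have hJDz : Jm n *ᵥ (D *ᵥ z)
      = κ • (Jm n *ᵥ z) + (κ * z i1) • E n ((i0 : Fin (2*n)):ℕ)
        - (κ * z i0) • E n ((i1 : Fin (2*n)):ℕ) - Dᵀ *ᵥ (Jm n *ᵥ z) := by
    rw [← Hz]; abel
  have hJz1 : (Jm n *ᵥ z) i1 = z i0 := by
    rw [Jmul, sg_of_val1 i1 h1, pt_of_val1 i0 i1 h0 h1]; ring
  have hLz : L *ᵥ z = (μ * z i1 + inn w₀ z) • E n ((i1 : Fin (2*n)):ℕ) + D *ᵥ z := by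
    funext k
    rw [Lmul i1 h1]
    by_cases hk : k = i1
    · simp [hk, h1, E, E_app]
    · have hk' : ¬((k:ℕ) = 1) := fun hh => hk (by apply Fin.ext; rw [h1]; exact hh)
      simp [hk, hk', h1, E, E_app]
  have hLy : L *ᵥ y = (μ * y i1 + inn w₀ y) • E n ((i1 : Fin (2*n)):ℕ) + D *ᵥ y := by
    funext k
    rw [Lmul i1 h1]
    by_cases hk : k = i1
    · simp [hk, h1, E, E_app]
    · have hk' : ¬((k:ℕ) = 1) := fun hh => hk (by apply Fin.ext; rw [h1]; exact hh)
      simp [hk, hk', h1, E, E_app]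
  have hJLz : Jm n *ᵥ (L *ᵥ z)
      = (μ * z i1 + inn w₀ z) • (- E n ((i0 : Fin (2*n)):ℕ)) + Jm n *ᵥ (D *ᵥ z) := by
    rw [hLz, Matrix.mulVec_add, Matrix.mulVec_smul, J_E1 i0 i1 h0 h1]
  have hLTJz : Lᵀ *ᵥ (Jm n *ᵥ z)
      = (μ * z i0) • E n ((i1 : Fin (2*n)):ℕ) + z i0 • w₀ + Dᵀ *ᵥ (Jm n *ᵥ z) := by
    funext k
    rw [LTmul i1 h1, hJz1, inn_zero_left]
    by_cases hk : k = i1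
    · simp [hk, h1, E, E_app]; ring
    · have hk' : ¬((k:ℕ) = 1) := fun hh => hk (by apply Fin.ext; rw [h1]; exact hh)
      simp [hk, hk', h1, E, E_app]; ring
  have hA : om (L *ᵥ z) y
      = -((μ * z i1 + inn w₀ z) * y i0)
        + (κ * inn (Jm n *ᵥ z) y + (κ * z i1) * y i0 - (κ * z i0) * y i1
            - inn (Dᵀ *ᵥ (Jm n *ᵥ z)) y) := by
    rw [om_def, hJLz, hJDz]
    simp only [inn_add_left, inn_sub_left, inn_smul_left, inn_neg_left, E_inn]
    ring
  have hB : om (L *ᵥ y) z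
      = -(μ * z i0 * y i1 + z i0 * inn w₀ y + inn (Dᵀ *ᵥ (Jm n *ᵥ z)) y) := by
    rw [om_def, inn_J_left, inn_mulVec_left, hLTJz, inn_comm]
    simp only [inn_add_left, inn_smul_left, E_inn]
  have hC : om y z = - inn (Jm n *ᵥ z) y := by
    rw [om_def, inn_J_left, inn_comm]
  rw [hA, hB, hC]
  ring

lemma converse (hv : inA (0 : G n)) (hw : inA w₀) (hD : DinA D)
    (i0 i1 : Fin (2*n)) (h0 : (i0:ℕ) = 0) (h1 : (i1:ℕ) = 1)
    {nabla : G n → G n → G n} (hK : Koszul (Lm μ 0 w₀ D) nabla)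
    (H : ∀ x : G n, inA x → Dᵀ *ᵥ (Jm n *ᵥ x) + Jm n *ᵥ (D *ᵥ x)
        = (Matrix.trace D / ((n:ℝ)-1)) • (Jm n *ᵥ x)) :
    ∀ x y z : G n, dOm (Lm μ 0 w₀ D) x y z
      = Lee nabla x * om y z + Lee nabla y * om z x + Lee nabla z * om x y := by
  intro x y z
  have hLee : ∀ u : G n, Lee nabla u = -(Matrix.trace D / ((n:ℝ)-1)) * u i0 := by
    intro u
    rw [Lee_formula hv hw hD i0 i1 h0 h1 hK, Matrix.mulVec_zero, inn_zero_left]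
    ring
  rw [dOm, om_br _ i0 h0, om_br _ i0 h0, om_br _ i0 h0, hLee x, hLee y, hLee z]
  have e1 := keyv (μ := μ) hw hD i0 i1 h0 h1 H y z
  have e2 := keyv (μ := μ) hw hD i0 i1 h0 h1 H z x
  have e3 := keyv (μ := μ) hw hD i0 i1 h0 h1 H x y
  linear_combination (x i0) * e1 + (y i0) * e2 + (z i0) * e3

end S13

/-- `n ≥ 3`: `dω = θ ∧ ω` (class `W₂⊕W₄`) iff `v₀ = 0` and
`Dᵗ J' + J' D = (Tr D/(n−1)) J'` as endomorphisms of `a`. -/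
theorem statement13 (n : ℕ) (hn : 3 ≤ n) (μ : ℝ) (v₀ w₀ : G n) (hv : inA v₀) (hw : inA w₀)
    (D : Matrix (Fin (2*n)) (Fin (2*n)) ℝ) (hD : DinA D)
    (nabla : G n → G n → G n) (hK : Koszul (Lm μ v₀ w₀ D) nabla) :
    (∀ x y z : G n,
        dOm (Lm μ v₀ w₀ D) x y z
          = Lee nabla x * om y z + Lee nabla y * om z x + Lee nabla z * om x y)
      ↔ (v₀ = 0
          ∧ (∀ x : G n, inA x →
              Dᵀ.mulVec ((Jm n).mulVec x) + (Jm n).mulVec (D.mulVec x)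
                = (Matrix.trace D / ((n : ℝ) - 1)) • (Jm n).mulVec x)) := by

  constructor
  · intro Hyp
    have hv0 : v₀ = 0 :=
      S13.v0_zero hn hv hw hD ⟨0, by omega⟩ ⟨1, by omega⟩ rfl rfl hK Hyp
    subst hv0
    exact ⟨rfl, S13.Dcond hv hw hD ⟨0, by omega⟩ ⟨1, by omega⟩ rfl rfl hK Hyp⟩
  · rintro ⟨hv0, H⟩
    subst hv0
    exact S13.converse hv hw hD ⟨0, by omega⟩ ⟨1, by omega⟩ rfl rfl hK H
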